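/- arXiv:1310.1362 — 5 statements merged into one kernel-verified Lean document; each statement's English description precedes it below -/
import Mathlib

section
/- Let X ⊂ ℙV be a variety, p ∈ ℙV a point with p ∉ X. If I_k(X) (the degree-k part of the ideal of X) is zero, then I_k(J(X,p)) is zero, and I_{k+1}(J(X,p)) = I_{k+1}(X) ∩ S^{k+1}(p^⊥), where p^⊥ ⊂ V* is the hyperplane of linear forms vanishing at p. -/
/-!
For `x ∈ X` the polynomial `t ↦ P(x + t p) = ∑ tⁱ qᵢ(x)` vanishes identically, so each Taylor
coefficient `qᵢ` of `P` in the direction `p` vanishes on `X`. For `i ≥ 1`, `qᵢ` is homogeneous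
of degree `k + 1 - i ≤ k`, and a power of a variable times `qᵢ` lies in `I_k(X) = 0`; hence
`P(v + t p) = q₀(v) = P(v)`. Conversely, such a `P` vanishing on `X` satisfies
`P(s x + t p) = sᵏ⁺¹ P(x) = 0`.
-/
namespace MvPolynomial
variable {σ R : Type*}

theorem IsHomogeneous.eval_smul [CommSemiring R] {P : MvPolynomial σ R} {n : ℕ}
    (hP : P.IsHomogeneous n) (c : R) (x : σ → R) :
    eval (c • x) P = c ^ n * eval x P := by
  rw [eval_eq, eval_eq, Finset.mul_sum]
  refine Finset.sum_congr rfl fun d hd => ?_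
  have hdeg : ∑ i ∈ d.support, d i = n := by
    simpa [Finsupp.weight_apply, Finsupp.sum] using hP (mem_support_iff.mp hd)
  simp only [Pi.smul_apply, smul_eq_mul, mul_pow, Finset.prod_mul_distrib,
    Finset.prod_pow_eq_pow_sum, hdeg]
  ring

variable [CommRing R]

/-- `P(X + T • p)`, with the extra variable `T = X none`. -/
noncomputable def translateAlong (p : σ → R) (P : MvPolynomial σ R) : MvPolynomial (Option σ) R :=
  aeval (fun j => X (some j) + C (p j) * X none) P

theorem IsHomogeneous.translateAlong {P : MvPolynomial σ R} {n : ℕ}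
    (hP : P.IsHomogeneous n) (p : σ → R) : (translateAlong p P).IsHomogeneous n := by
  rw [MvPolynomial.translateAlong, ← one_mul n]
  exact hP.aeval _ fun j =>
    (isHomogeneous_X R (some j)).add ((isHomogeneous_C _ (p j)).mul (isHomogeneous_X R none))

theorem eval_translateAlong (p v : σ → R) (t : R) (P : MvPolynomial σ R) :
    eval (fun o => o.elim t v) (translateAlong p P) = eval (v + t • p) P := by
  rw [translateAlong, ← aeval_eq_eval, comp_aeval_apply, aeval_eq_eval]
  congr 2
  funext j
  simp [mul_comm]

/-- The coefficient of `tⁱ` is the polynomial `qᵢ` with `P(v + t • p) = ∑ tⁱ qᵢ(v)`. -/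
noncomputable def taylorAlong (p : σ → R) (P : MvPolynomial σ R) :
    Polynomial (MvPolynomial σ R) :=
  optionEquivLeft R σ (translateAlong p P)

theorem eval_taylorAlong (p v : σ → R) (t : R) (P : MvPolynomial σ R) :
    ((taylorAlong p P).map (eval v)).eval t = eval (v + t • p) P := by
  rw [taylorAlong, ← optionEquivLeft_elim_eval, eval_translateAlong]

theorem IsHomogeneous.taylorAlong_coeff [Finite σ] {P : MvPolynomial σ R} {n : ℕ}
    (hP : P.IsHomogeneous n) (p : σ → R) {i j : ℕ} (hij : i + j = n) :
    ((taylorAlong p P).coeff i).IsHomogeneous j :=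
  coeff_isHomogeneous_of_optionEquivLeft_symm
    (by simpa [taylorAlong] using hP.translateAlong p) i j hij

theorem IsHomogeneous.taylorAlong_coeff_eq_zero {P : MvPolynomial σ R} {n : ℕ}
    (hP : P.IsHomogeneous n) (p : σ → R) {i : ℕ} (hi : n < i) :
    (taylorAlong p P).coeff i = 0 := by
  refine Polynomial.coeff_eq_zero_of_natDegree_lt (lt_of_le_of_lt ?_ hi)
  rw [taylorAlong, natDegree_optionEquivLeft]
  exact (degreeOf_le_totalDegree _ _).trans (hP.translateAlong p).totalDegree_le

variable {Z : Set (σ → R)} {p : σ → R}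

/-- The affine cone over the join `J(X, p)`; taking the closure would not change which
polynomials vanish on it. -/
def coneOver (Z : Set (σ → R)) (p : σ → R) : Set (σ → R) :=
  {v | ∃ x ∈ Z, ∃ s t : R, v = s • x + t • p}

theorem subset_coneOver : Z ⊆ coneOver Z p := fun x hx => ⟨x, hx, 1, 0, by simp⟩

theorem add_smul_mem_coneOver {x : σ → R} (hx : x ∈ Z) (t : R) : x + t • p ∈ coneOver Z p :=
  ⟨x, hx, 1, t, by simp⟩

theorem IsHomogeneous.eval_eq_zero_of_mem_coneOver {P : MvPolynomial σ R} {n : ℕ}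
    (hP : P.IsHomogeneous n) (hPZ : ∀ x ∈ Z, eval x P = 0)
    (hPp : ∀ v (t : R), eval (v + t • p) P = eval v P) {v : σ → R} (hv : v ∈ coneOver Z p) :
    eval v P = 0 := by
  obtain ⟨x, hx, s, t, rfl⟩ := hv
  rw [hPp, hP.eval_smul, hPZ x hx, mul_zero]

theorem eq_zero_of_isHomogeneous_of_le [IsDomain R] [Nonempty σ] {k d : ℕ}
    (hZ : ∀ Q : MvPolynomial σ R, Q.IsHomogeneous k → (∀ x ∈ Z, eval x Q = 0) → Q = 0)
    {q : MvPolynomial σ R} (hq : q.IsHomogeneous d) (hd : d ≤ k) (hqZ : ∀ x ∈ Z, eval x q = 0) :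
    q = 0 := by
  obtain ⟨j⟩ := ‹Nonempty σ›
  have hXq : X j ^ (k - d) * q = 0 := by
    refine hZ _ ?_ fun x hx => by simp [hqZ x hx]
    simpa [Nat.sub_add_cancel hd] using (isHomogeneous_X_pow j (k - d)).mul hq
  exact (mul_eq_zero.mp hXq).resolve_left (pow_ne_zero _ (X_ne_zero j))

theorem eval_taylorAlong_coeff_eq_zero [IsDomain R] [Infinite R] {P : MvPolynomial σ R}
    {x : σ → R} (hx : ∀ t : R, eval (x + t • p) P = 0) (i : ℕ) :
    eval x ((taylorAlong p P).coeff i) = 0 := by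
  have h : (taylorAlong p P).map (eval x) = 0 :=
    Polynomial.funext fun t => by simp [eval_taylorAlong, hx]
  simpa using congrArg (Polynomial.coeff · i) h

theorem eval_add_smul_eq_of_taylorAlong_coeff_eq_zero {P : MvPolynomial σ R}
    (h : ∀ i ≠ 0, (taylorAlong p P).coeff i = 0) (v : σ → R) (t : R) :
    eval (v + t • p) P = eval v P := by
  have hC : taylorAlong p P = Polynomial.C ((taylorAlong p P).coeff 0) := by
    ext1 i
    rcases i with _ | i
    · simp
    · simp [h]
  calc eval (v + t • p) P = ((taylorAlong p P).map (eval v)).eval t := (eval_taylorAlong ..).symm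
    _ = ((taylorAlong p P).map (eval v)).eval 0 := by rw [hC]; simp
    _ = eval v P := by rw [eval_taylorAlong, zero_smul, add_zero]

theorem vanishes_on_coneOver_iff [Finite σ] [Nonempty σ] [IsDomain R] [Infinite R] {k : ℕ}
    (hZ : ∀ Q : MvPolynomial σ R, Q.IsHomogeneous k → (∀ x ∈ Z, eval x Q = 0) → Q = 0)
    {P : MvPolynomial σ R} (hP : P.IsHomogeneous (k + 1)) :
    (∀ v ∈ coneOver Z p, eval v P = 0) ↔
      (∀ x ∈ Z, eval x P = 0) ∧ ∀ v (t : R), eval (v + t • p) P = eval v P := by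
  refine ⟨fun hJ => ⟨fun x hx => hJ x (subset_coneOver hx), ?_⟩,
    fun ⟨hPZ, hPp⟩ v => hP.eval_eq_zero_of_mem_coneOver hPZ hPp⟩
  refine eval_add_smul_eq_of_taylorAlong_coeff_eq_zero fun i hi => ?_
  rcases le_or_gt i (k + 1) with hik | hik
  · refine eq_zero_of_isHomogeneous_of_le hZ (hP.taylorAlong_coeff p (Nat.add_sub_cancel' hik))
      (by omega) fun x hx => ?_
    exact eval_taylorAlong_coeff_eq_zero (fun t => hJ _ (add_smul_mem_coneOver hx t)) i
  · exact hP.taylorAlong_coeff_eq_zero p hik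

end MvPolynomial

theorem cone_over_point_low_degree_ideal_general (N k : ℕ) (X : Set (Fin N → ℂ))
    (p : Fin N → ℂ) (hp : p ≠ 0)
    (hIk : ∀ Q : MvPolynomial (Fin N) ℂ, Q.IsHomogeneous k →
      (∀ x ∈ X, MvPolynomial.eval x Q = 0) → Q = 0) :
    (∀ Q : MvPolynomial (Fin N) ℂ, Q.IsHomogeneous k →
      (∀ v : Fin N → ℂ, (∃ x ∈ X, ∃ s t : ℂ, v = s • x + t • p) →
        MvPolynomial.eval v Q = 0) → Q = 0) ∧
    (∀ P : MvPolynomial (Fin N) ℂ, P.IsHomogeneous (k + 1) →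
      ((∀ v : Fin N → ℂ, (∃ x ∈ X, ∃ s t : ℂ, v = s • x + t • p) →
          MvPolynomial.eval v P = 0) ↔
        ((∀ x ∈ X, MvPolynomial.eval x P = 0) ∧
          ∀ v : Fin N → ℂ, ∀ t : ℂ,
            MvPolynomial.eval (v + t • p) P = MvPolynomial.eval v P))) := by
  obtain ⟨j, -⟩ := Function.ne_iff.mp hp
  have : Nonempty (Fin N) := ⟨j⟩
  exact ⟨fun Q hQ hQJ => hIk Q hQ fun x hx => hQJ x (MvPolynomial.subset_coneOver hx),
    fun P hP => MvPolynomial.vanishes_on_coneOver_iff hIk hP⟩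

theorem cone_over_point_low_degree_ideal (N k : ℕ) (X : Set (Fin N → ℂ))
    (p : Fin N → ℂ) (hp : p ≠ 0) (hpX : p ∉ X)
    (hIk : ∀ Q : MvPolynomial (Fin N) ℂ, Q.IsHomogeneous k →
      (∀ x ∈ X, MvPolynomial.eval x Q = 0) → Q = 0) :
    (∀ Q : MvPolynomial (Fin N) ℂ, Q.IsHomogeneous k →
      (∀ v : Fin N → ℂ, (∃ x ∈ X, ∃ s t : ℂ, v = s • x + t • p) →
        MvPolynomial.eval v Q = 0) → Q = 0) ∧
    (∀ P : MvPolynomial (Fin N) ℂ, P.IsHomogeneous (k + 1) →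
      ((∀ v : Fin N → ℂ, (∃ x ∈ X, ∃ s t : ℂ, v = s • x + t • p) →
          MvPolynomial.eval v P = 0) ↔
        ((∀ x ∈ X, MvPolynomial.eval x P = 0) ∧
          ∀ v : Fin N → ℂ, ∀ t : ℂ,
            MvPolynomial.eval (v + t • p) P = MvPolynomial.eval v P))) :=
  cone_over_point_low_degree_ideal_general N k X p hp hIk
end

section
/- Let n, r be given with r ≤ n−2 and let S' = {x^1_1, ..., x^{n-r}_1} (the top n−r entries of the first column) and S = S' ∪ {x^{n-r+1}_1, ..., x^n_1} (the entire first column). Then the closure of the set of matrices expressible as (rank ≤ r) + (supported on S) equals the closure of the set of matrices expressible as (rank ≤ r) + (supported on S'): J(σ_r, L^S) = J(σ_r, L^{S'}). -/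
/-!
Write the rank-`≤ r` summand as `U * W` with `U` of width `r` and move along the line
`M + t • (E * W)`, where `E` is the identity block on the last `r` rows. This replaces `U` by
`U + t • E`, whose last `r` rows form `U_κ + t • 1` (`U_κ` the last `r` rows of `U`), invertible for
all but finitely many `t`. For such `t`, the last `r` entries of the first-column summand are a
combination of the columns of `U + t • E` restricted to those rows, so changing the first column of
`W` absorbs them into the low-rank summand. A polynomial vanishing on the smaller join thus
vanishes on the line at cofinitely many points, hence identically, in particular at `t = 0`.
-/

/-- The Zariski closure of a set of `n × n` complex matrices: the common zero
locus of all polynomials (in the matrix entries) vanishing on the set. -/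
def matrixZariskiClosure {n : ℕ} (Z : Set (Matrix (Fin n) (Fin n) ℂ)) :
    Set (Matrix (Fin n) (Fin n) ℂ) :=
  {M | ∀ P : MvPolynomial (Fin n × Fin n) ℂ,
    (∀ A ∈ Z, MvPolynomial.eval (fun p => A p.1 p.2) P = 0) →
    MvPolynomial.eval (fun p => M p.1 p.2) P = 0}

open Matrix

theorem Matrix.exists_eq_mul_of_rank_le {m n K : Type*} [Field K] [Fintype n] [DecidableEq n]
    (A : Matrix m n K) {r : ℕ} (h : A.rank ≤ r) :
    ∃ (U : Matrix m (Fin r) K) (W : Matrix (Fin r) n K), A = U * W := by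
  set R := LinearMap.range A.mulVecLin
  have h : Module.finrank K R ≤ r := h
  let b := (Module.finBasis K R).equivFun
  let P : Matrix (Fin (Module.finrank K R)) (Fin r) K :=
    (1 : Matrix (Fin r) (Fin r) K).submatrix (Fin.castLE h) id
  have hP : P * Pᵀ = 1 := by
    rw [transpose_submatrix, transpose_one, ← submatrix_mul _ _ _ _ _ Function.bijective_id,
      Matrix.mul_one, submatrix_one _ (Fin.castLE_injective h)]
  refine ⟨LinearMap.toMatrix' (R.subtype ∘ₗ b.symm.toLinearMap) * P,
    Pᵀ * LinearMap.toMatrix' (b.toLinearMap ∘ₗ A.mulVecLin.rangeRestrict), ?_⟩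
  rw [Matrix.mul_assoc, ← Matrix.mul_assoc P, hP, Matrix.one_mul, ← LinearMap.toMatrix'_comp,
    LinearMap.comp_assoc, ← LinearMap.comp_assoc A.mulVecLin.rangeRestrict,
    LinearEquiv.symm_comp, LinearMap.id_comp, LinearMap.subtype_comp_codRestrict]
  exact (LinearMap.toMatrix'_toLin' A).symm

theorem Matrix.exists_mul_add_eq_mul_add_of_isUnit_det {m n ι K : Type*} [Field K] [Fintype ι]
    [DecidableEq ι] [DecidableEq n] (U : Matrix m ι K) (W : Matrix ι n K) (B : Matrix m n K)
    (j₀ : n) {κ : ι → m} (hU : IsUnit (U.submatrix κ id).det) :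
    ∃ (W' : Matrix ι n K) (B' : Matrix m n K), U * W + B = U * W' + B' ∧
      (∀ i j, j ≠ j₀ → B' i j = B i j) ∧ ∀ k, B' (κ k) j₀ = 0 := by
  set c := (U.submatrix κ id)⁻¹ *ᵥ fun k => B (κ k) j₀
  have hc : ∀ k, (U *ᵥ c) (κ k) = B (κ k) j₀ := fun k => by
    change (U.submatrix κ id *ᵥ c) k = _
    rw [mulVec_mulVec, mul_nonsing_inv _ hU, one_mulVec]
  refine ⟨W + vecMulVec c (Pi.single j₀ 1), B - vecMulVec (U *ᵥ c) (Pi.single j₀ 1), ?_, ?_, ?_⟩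
  · rw [Matrix.mul_add, mul_vecMulVec]
    abel
  · intro i j hj
    simp [vecMulVec_apply, hj]
  · intro k
    simp [vecMulVec_apply, hc]

theorem Matrix.finite_setOf_det_add_smul_one_eq_zero {ι K : Type*} [Field K] [Fintype ι]
    [DecidableEq ι] (U : Matrix ι ι K) : {t : K | (U + t • 1).det = 0}.Finite :=
  (Polynomial.finite_setOfPred_isRoot (charpoly_monic (-U)).ne_zero).subset fun t ht => by
    simpa [Polynomial.IsRoot, eval_charpoly, add_comm, smul_one_eq_diagonal] using ht

theorem matrixZariskiClosure_mono {n : ℕ} {Z₁ Z₂ : Set (Matrix (Fin n) (Fin n) ℂ)}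
    (h : Z₁ ⊆ Z₂) : matrixZariskiClosure Z₁ ⊆ matrixZariskiClosure Z₂ :=
  fun _ hM P hP => hM P fun A hA => hP A (h hA)

theorem matrixZariskiClosure_subset_of_subset_matrixZariskiClosure {n : ℕ}
    {Z₁ Z₂ : Set (Matrix (Fin n) (Fin n) ℂ)}
    (h : Z₁ ⊆ matrixZariskiClosure Z₂) : matrixZariskiClosure Z₁ ⊆ matrixZariskiClosure Z₂ :=
  fun _ hM P hP => hM P fun _ hA => h hA P hP

open Polynomial in
theorem mem_matrixZariskiClosure_of_eventually_cofinite {n : ℕ}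
    {Z : Set (Matrix (Fin n) (Fin n) ℂ)} {M D : Matrix (Fin n) (Fin n) ℂ}
    (h : ∀ᶠ t : ℂ in Filter.cofinite, M + t • D ∈ Z) : M ∈ matrixZariskiClosure Z := by
  intro P hP
  let q : ℂ[X] := MvPolynomial.eval₂ C (fun p => C (M p.1 p.2) + X * C (D p.1 p.2)) P
  have hq : ∀ t, q.eval t = MvPolynomial.eval (fun p => (M + t • D) p.1 p.2) P := fun t => by
    rw [MvPolynomial.polynomial_eval_eval₂]
    show _ = MvPolynomial.eval₂ (RingHom.id ℂ) _ P
    congr 1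
    · ext
      simp
    · funext p
      simp only [eval_add, eval_mul, eval_C, eval_X]
      rfl
  have hq0 : q = 0 := eq_zero_of_infinite_isRoot q <|
    (Filter.eventually_cofinite.1 h).infinite_compl.mono fun t ht => by
      simpa [hq] using hP _ (not_not.1 ht)
  simpa [hq] using congrArg (eval 0) hq0

/-- Lemma: changes along the whole first column are absorbed by changes along
its top `n - r` entries, i.e. `J(σ_r, L^S) = J(σ_r, L^{S'})`. -/
theorem join_first_column_autoelimination (n r : ℕ) [NeZero n] (hr : r ≤ n - 2) :
    matrixZariskiClosure
      {M : Matrix (Fin n) (Fin n) ℂ | ∃ A B, M = A + B ∧ A.rank ≤ r ∧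
        ∀ i j : Fin n, ¬(j = 0) → B i j = 0} =
    matrixZariskiClosure
      {M : Matrix (Fin n) (Fin n) ℂ | ∃ A B, M = A + B ∧ A.rank ≤ r ∧
        ∀ i j : Fin n, ¬(j = 0 ∧ (i : ℕ) < n - r) → B i j = 0} := by
  refine subset_antisymm (matrixZariskiClosure_subset_of_subset_matrixZariskiClosure ?_)
    (matrixZariskiClosure_mono ?_)
  · rintro _ ⟨A, B, rfl, hA, hB⟩
    obtain ⟨U, W, rfl⟩ := A.exists_eq_mul_of_rank_le hA
    let κ : Fin r → Fin n := fun k => ⟨n - r + k, by omega⟩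
    have hκ : Function.Injective κ := fun k l h => Fin.ext (by simpa [κ] using h)
    let E : Matrix (Fin n) (Fin r) ℂ := (1 : Matrix (Fin n) (Fin n) ℂ).submatrix id κ
    refine mem_matrixZariskiClosure_of_eventually_cofinite (D := E * W) ?_
    filter_upwards [(U.submatrix κ id).finite_setOf_det_add_smul_one_eq_zero.compl_mem_cofinite]
      with t hdet
    have hκ_rows : (U + t • E).submatrix κ id = U.submatrix κ id + t • 1 := by
      ext k l
      simp [E, one_apply, hκ.eq_iff]
    obtain ⟨W', B', hUW, hoff, hbot⟩ := (U + t • E).exists_mul_add_eq_mul_add_of_isUnit_det W B 0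
      (by rw [hκ_rows]; exact isUnit_iff_ne_zero.2 hdet)
    refine ⟨(U + t • E) * W', B', ?_, (rank_mul_le_left _ _).trans (rank_le_width _),
      fun i j hij => ?_⟩
    · rw [← hUW, Matrix.add_mul, Matrix.smul_mul]
      abel
    by_cases hj : j = 0
    · subst hj
      obtain ⟨k, rfl⟩ : ∃ k, κ k = i := ⟨⟨i - (n - r), by omega⟩, Fin.ext (by simp [κ]; omega)⟩
      exact hbot k
    · rw [hoff i j hj, hB i j hj]
  · rintro _ ⟨A, B, rfl, hA, hB⟩
    exact ⟨A, B, rfl, hA, fun i j hj => hB i j fun h => hj h.1⟩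
end

section
/- For n = 3, r = 1 and S = {x^1_1, x^2_2, x^3_3}: the polynomial x^2_1 x^3_2 x^1_3 − x^1_2 x^2_3 x^3_1 vanishes on every 3×3 complex matrix of the form A + D where rank(A) ≤ 1 and D is diagonal. -/
/-!
Off the diagonal, `A + D` agrees with `A`, and the polynomial involves only off-diagonal
entries. It is a combination of two 2 × 2 minors of `A`:
`x₁₀ x₂₁ x₀₂ - x₀₁ x₁₂ x₂₀ = x₀₂ (x₁₀ x₂₁ - x₁₁ x₂₀) - x₂₀ (x₀₁ x₁₂ - x₀₂ x₁₁)`,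
and all 2 × 2 minors of a matrix of rank at most one vanish.
-/

namespace Matrix

variable {R m n o : Type*} [CommRing R] [IsDomain R] [Fintype n] [Fintype o] [DecidableEq o]

theorem det_submatrix_eq_zero_of_rank_lt (A : Matrix m n R) (r : o → m) (c : o → n)
    (h : A.rank < Fintype.card o) : (A.submatrix r c).det = 0 := by
  by_contra hdet
  have := rank_of_det_ne_zero hdet ▸ rank_submatrix_le A r c
  omega

theorem mul_sub_mul_eq_zero_of_rank_le_one {A : Matrix m n R} (hA : A.rank ≤ 1)
    (i₁ i₂ : m) (j₁ j₂ : n) : A i₁ j₁ * A i₂ j₂ - A i₁ j₂ * A i₂ j₁ = 0 := by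
  have := A.det_submatrix_eq_zero_of_rank_lt ![i₁, i₂] ![j₁, j₂]
    (by rw [Fintype.card_fin]; omega)
  rwa [det_fin_two] at this

end Matrix

theorem rank_one_plus_diagonal_equation (M A D : Matrix (Fin 3) (Fin 3) ℂ)
    (hM : M = A + D) (hA : A.rank ≤ 1)
    (hD : ∀ i j : Fin 3, i ≠ j → D i j = 0) :
    M 1 0 * M 2 1 * M 0 2 - M 0 1 * M 1 2 * M 2 0 = 0 := by
  have hoff : ∀ i j : Fin 3, i ≠ j → M i j = A i j := fun i j hij => by
    simp [hM, hD i j hij]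
  rw [hoff 1 0 (by decide), hoff 2 1 (by decide), hoff 0 2 (by decide),
    hoff 0 1 (by decide), hoff 1 2 (by decide), hoff 2 0 (by decide)]
  linear_combination A 0 2 * Matrix.mul_sub_mul_eq_zero_of_rank_le_one hA 1 2 0 1
    - A 2 0 * Matrix.mul_sub_mul_eq_zero_of_rank_le_one hA 0 1 1 2
end

section
/- Let n ≥ 2, let w ∈ ℂ, and let V(w) be the n×n Vandermonde matrix with entries V^i_j = (y_j)^{i-1} for variables y_1,...,y_n. For any k with 2 ≤ k ≤ n, any distinct rows i_1,...,i_k and columns j_1,...,j_k, and any k-cycle σ, the binomial x^{i_1}_{j_1}···x^{i_k}_{j_k} − x^{i_1}_{j_{σ(1)}}···x^{i_k}_{j_{σ(k)}} does not vanish identically on Vandermonde matrices: there exist values y_1,...,y_n making it nonzero. -/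
/- Put `y = 2` at the single variable `y (j (σ t₀))`, where `σ` moves `t₀`, and `1` elsewhere.
Since `j` is injective the two monomials evaluate to `2 ^ i (σ t₀)` and `2 ^ i t₀`, which differ
because `i` is injective. -/

theorem Fintype.prod_mulSingle_comp_pow_of_injective {ι α M : Type*} [Fintype ι] [DecidableEq α]
    [CommMonoid M] {j : ι → α} (hj : Function.Injective j) (a : ι) (c : M) (e : ι → ℕ) :
    ∏ t, (Pi.mulSingle (j a) c : α → M) (j t) ^ e t = c ^ e a := by
  rw [Fintype.prod_eq_single a fun t ht => by
    rw [Pi.mulSingle_eq_of_ne (hj.ne ht), one_pow],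
    Pi.mulSingle_eq_same]

theorem vandermonde_not_in_cycle_binomial_hypersurface_general (n k : ℕ)
    (i j : Fin k → Fin n) (hi : Function.Injective i) (hj : Function.Injective j)
    (σ : Equiv.Perm (Fin k)) (hσ : σ.IsCycle) :
    ∃ y : Fin n → ℂ,
      (∏ t : Fin k, y (j t) ^ ((i t : ℕ))) ≠
        ∏ t : Fin k, y (j (σ t)) ^ ((i t : ℕ)) := by
  obtain ⟨t₀, hσt₀, -⟩ := hσ
  refine ⟨Pi.mulSingle (j (σ t₀)) 2, ?_⟩
  have hR := Fintype.prod_mulSingle_comp_pow_of_injective (hj.comp σ.injective) t₀ (2 : ℂ)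
    fun t => (i t : ℕ)
  simp only [Function.comp_apply] at hR
  rw [Fintype.prod_mulSingle_comp_pow_of_injective hj, hR]
  have hexp : (i (σ t₀) : ℕ) ≠ i t₀ := Fin.val_injective.ne (hi.ne hσt₀)
  exact_mod_cast (Nat.pow_right_injective le_rfl).ne hexp

theorem vandermonde_not_in_cycle_binomial_hypersurface (n k : ℕ)
    (hn : 2 ≤ n) (hk2 : 2 ≤ k) (hkn : k ≤ n)
    (i j : Fin k → Fin n) (hi : Function.Injective i) (hj : Function.Injective j)
    (σ : Equiv.Perm (Fin k)) (hσ : σ.IsCycle) (hσsupp : σ.support = Finset.univ) :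
    ∃ y : Fin n → ℂ,
      (∏ t : Fin k, y (j t) ^ ((i t : ℕ))) ≠
        ∏ t : Fin k, y (j (σ t)) ^ ((i t : ℕ)) :=
  vandermonde_not_in_cycle_binomial_hypersurface_general n k i j hi hj σ hσ
end

section
/- Fix p prime and w ∈ ℂ*. The p×p matrix A with A^i_j = w^{(i-1)(j-1) mod p} (the DFT-curve matrix) satisfies Rig_1(A) ≤ p² − 3p + 3: changing the (1,1) entry to w^{-1} and changing every entry in the lower-right (p−1)×(p−1) submatrix to w yields a matrix of rank at most 1, and the number of entries changed is at most (p−1)² + 1 − (p−1) = p² − 3p + 3. -/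
/-!
The rank-one matrix `u vᵀ` with `u = (1, w, …, w)` and `v = (w⁻¹, 1, …, 1)` agrees with the
DFT-curve matrix on the first row and column except at the corner, and at the `p - 1` positions
`(i, i⁻¹ mod p)` with `i ≠ 0`, where both entries are `w`. Hence they differ in at most
`1 + (p - 1)(p - 2) = p² - 3p + 3` entries.
-/

open Finset Matrix

theorem Finset.card_filter_univ_prod {α β : Type*} [Fintype α] [Fintype β]
    (P : α × β → Prop) [DecidablePred P] :
    #{q | P q} = ∑ a, #{b | P (a, b)} := by
  simp only [Finset.card_filter, Fintype.sum_prod_type]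

section Fin

variable {p : ℕ} [NeZero p]

theorem Fin.exists_mul_mod_eq_one_of_prime (hp : p.Prime) {i : Fin p} (hi : i ≠ 0) :
    ∃ j : Fin p, (i : ℕ) * j % p = 1 := by
  obtain ⟨m, hm, hmod⟩ := Nat.exists_mul_mod_eq_one_of_coprime
    (Nat.coprime_of_lt_prime (Fin.val_ne_zero_iff.mpr hi) i.isLt hp).symm hp.one_lt
  exact ⟨⟨m, hm⟩, hmod⟩

theorem Fin.card_filter_ne_zero_mul_mod_ne_one_le (hp : p.Prime) {i : Fin p} (hi : i ≠ 0) :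
    #{j : Fin p | j ≠ 0 ∧ (i : ℕ) * j % p ≠ 1} ≤ p - 2 := by
  obtain ⟨j₀, hj₀⟩ := Fin.exists_mul_mod_eq_one_of_prime hp hi
  have hj₀_ne : j₀ ≠ 0 := by
    rintro rfl
    simp at hj₀
  calc #{j : Fin p | j ≠ 0 ∧ (i : ℕ) * j % p ≠ 1}
      ≤ #((univ.erase 0).erase j₀) := by
        refine card_le_card fun j hj => ?_
        simp only [mem_filter, mem_univ, true_and] at hj
        simp only [mem_erase, mem_univ, and_true]
        exact ⟨fun h => hj.2 (h ▸ hj₀), hj.1⟩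
    _ = p - 2 := by
        rw [card_erase_of_mem (by simpa using hj₀_ne), card_erase_of_mem (mem_univ _),
          card_univ, Fintype.card_fin]
        omega

end Fin

section DFTCurve

variable {K : Type*} [Field K] {p : ℕ} [NeZero p]

def dftCurveRankOneApprox (p : ℕ) [NeZero p] (w : K) : Matrix (Fin p) (Fin p) K :=
  vecMulVec (fun i => if i = 0 then 1 else w) (fun j => if j = 0 then w⁻¹ else 1)

variable {w : K} {A : Matrix (Fin p) (Fin p) K}

theorem eq_zero_of_ne_dftCurveRankOneApprox_zero
    (hA : ∀ i j : Fin p, A i j = w ^ ((i : ℕ) * j % p)) {j : Fin p}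
    (h : A 0 j ≠ dftCurveRankOneApprox p w 0 j) : j = 0 := by
  by_contra hj
  simp [hA, dftCurveRankOneApprox, vecMulVec_apply, hj] at h

theorem ne_zero_and_mul_mod_ne_one_of_ne_dftCurveRankOneApprox (hw : w ≠ 0)
    (hA : ∀ i j : Fin p, A i j = w ^ ((i : ℕ) * j % p)) {i j : Fin p} (hi : i ≠ 0)
    (h : A i j ≠ dftCurveRankOneApprox p w i j) : j ≠ 0 ∧ (i : ℕ) * j % p ≠ 1 := by
  simp only [hA, dftCurveRankOneApprox, vecMulVec_apply, if_neg hi] at h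
  refine ⟨?_, fun h1 => ?_⟩
  · rintro rfl
    simp [hw] at h
  · have hj : j ≠ 0 := by
      rintro rfl
      simp at h1
    simp [h1, hj] at h

theorem ncard_ne_dftCurveRankOneApprox_le (hp : p.Prime) (hw : w ≠ 0)
    (hA : ∀ i j : Fin p, A i j = w ^ ((i : ℕ) * j % p)) :
    {q : Fin p × Fin p | A q.1 q.2 ≠ dftCurveRankOneApprox p w q.1 q.2}.ncard
      ≤ 1 + (p - 1) * (p - 2) := by
  classical
  rw [Set.ncard_eq_toFinset_card', Set.toFinset_ofPred, card_filter_univ_prod,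
    ← add_sum_erase _ _ (mem_univ 0)]
  have hrow_zero : #{j | A 0 j ≠ dftCurveRankOneApprox p w 0 j} ≤ 1 :=
    card_le_one.mpr fun j hj j' hj' => by
      simp only [mem_filter, mem_univ, true_and] at hj hj'
      rw [eq_zero_of_ne_dftCurveRankOneApprox_zero hA hj,
        eq_zero_of_ne_dftCurveRankOneApprox_zero hA hj']
  have hrow : ∀ i ∈ univ.erase (0 : Fin p),
      #{j | A i j ≠ dftCurveRankOneApprox p w i j} ≤ p - 2 := fun i hi =>
    (card_le_card <| monotone_filter_right _ fun j _ =>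
        ne_zero_and_mul_mod_ne_one_of_ne_dftCurveRankOneApprox hw hA (ne_of_mem_erase hi)).trans
      (Fin.card_filter_ne_zero_mul_mod_ne_one_le hp (ne_of_mem_erase hi))
  calc _ ≤ 1 + #(univ.erase (0 : Fin p)) • (p - 2) :=
        add_le_add hrow_zero (sum_le_card_nsmul _ _ _ hrow)
    _ = 1 + (p - 1) * (p - 2) := by
      rw [card_erase_of_mem (mem_univ _), card_univ, Fintype.card_fin, smul_eq_mul]

end DFTCurve

theorem dft_curve_rigidity_bound (p : ℕ) (hp : p.Prime) (w : ℂ) (hw : w ≠ 0)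
    (A : Matrix (Fin p) (Fin p) ℂ)
    (hA : ∀ i j : Fin p, A i j = w ^ (((i : ℕ) * (j : ℕ)) % p)) :
    ∃ B : Matrix (Fin p) (Fin p) ℂ, B.rank ≤ 1 ∧
      (Set.ncard {q : Fin p × Fin p | A q.1 q.2 ≠ B q.1 q.2} : ℤ) ≤
        (p : ℤ) ^ 2 - 3 * (p : ℤ) + 3 := by
  have : NeZero p := ⟨hp.ne_zero⟩
  refine ⟨dftCurveRankOneApprox p w, rank_vecMulVec_le _ _, ?_⟩
  calc _ ≤ ((1 + (p - 1) * (p - 2) : ℕ) : ℤ) := by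
        exact_mod_cast ncard_ne_dftCurveRankOneApprox_le hp hw hA
    _ = (p : ℤ) ^ 2 - 3 * (p : ℤ) + 3 := by
        push_cast [Nat.cast_sub hp.one_le, Nat.cast_sub hp.two_le]
        ring
end
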